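/- Let G be an m×m real generator matrix (G_{ij} ≥ 0 for i ≠ j and Σ_j G_{ij} = 0 for every i), ᾱ : {1,…,m} → ℝ with ᾱ(i) ≥ 0, A = diag(ᾱ), Q = G − A, and let π ∈ ℝ^m be a probability vector (π_i ≥ 0, Σ_i π_i = 1). Define y(t) = π ·ᵥ exp(t·Q) and s(t) = Σ_i y_i(t). Then for every t ≥ 0 one has s(t) > 0, and the normalized vector x(t) = y(t)/s(t) satisfies, for each i, the differential equation d x_i/dt = Σ_j x_j(t) G_{ji} − x_i(t) ᾱ(i) + x_i(t) · Σ_j x_j(t) ᾱ(j). (This is the deterministic inter-event flow of the posterior probabilities Π_t in Proposition 1: between reaction times, Π_t = x(t − τ_k, Π_{τ_k}, X_{τ_k}) where x_i(t, π, X) = P(τ₁ > t, M_t = i | M_0 ∼ π, X_0 = X)/P(τ₁ > t | M_0 ∼ π, X_0 = X).) -/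

import Mathlib

open Matrix NormedSpace

variable {m : ℕ}

noncomputable def entryCLM (i j : Fin m) : Matrix (Fin m) (Fin m) ℝ →L[ℝ] ℝ where
  toFun A := A i j
  map_add' _ _ := rfl
  map_smul' _ _ := rfl
  cont := (continuous_apply j).comp (continuous_apply i)

lemma exp_entry_nonneg (N : Matrix (Fin m) (Fin m) ℝ) (hN : ∀ i j, 0 ≤ N i j) (i j : Fin m) :
    (1 : Matrix (Fin m) (Fin m) ℝ) i j ≤ NormedSpace.exp N i j := by
  letI : SeminormedRing (Matrix (Fin m) (Fin m) ℝ) := Matrix.linftyOpSemiNormedRing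
  letI : NormedRing (Matrix (Fin m) (Fin m) ℝ) := Matrix.linftyOpNormedRing
  letI : NormedAlgebra ℝ (Matrix (Fin m) (Fin m) ℝ) := Matrix.linftyOpNormedAlgebra
  have hpow : ∀ n, ∀ a b : Fin m, 0 ≤ (N ^ n) a b := by
    intro n
    induction n with
    | zero => intro a b; simp [Matrix.one_apply]; positivity
    | succ n ih =>
      intro a b
      rw [pow_succ, Matrix.mul_apply]
      exact Finset.sum_nonneg fun k _ => mul_nonneg (ih a k) (hN k b)
  have hsum : Summable fun n : ℕ => ((n.factorial : ℝ)⁻¹) • N ^ n :=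
    NormedSpace.expSeries_summable' (𝕂 := ℝ) N
  have hsum' : Summable fun n : ℕ => entryCLM i j (((n.factorial : ℝ)⁻¹) • N ^ n) :=
    hsum.map (entryCLM i j : Matrix (Fin m) (Fin m) ℝ →ₗ[ℝ] ℝ).toAddMonoidHom
      (entryCLM i j).continuous
  have hentry : NormedSpace.exp N i j
      = ∑' n : ℕ, entryCLM i j (((n.factorial : ℝ)⁻¹) • N ^ n) := by
    have : NormedSpace.exp N = ∑' n : ℕ, ((n.factorial : ℝ)⁻¹) • N ^ n := by
      rw [NormedSpace.exp_eq_tsum (𝕂 := ℝ)]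
    rw [this, ← (entryCLM i j).map_tsum hsum]
    rfl
  rw [hentry]
  have h0 : entryCLM i j (((Nat.factorial 0 : ℝ)⁻¹) • N ^ 0)
      = (1 : Matrix (Fin m) (Fin m) ℝ) i j := by
    simp [entryCLM]; rfl
  calc (1 : Matrix (Fin m) (Fin m) ℝ) i j
      = entryCLM i j (((Nat.factorial 0 : ℝ)⁻¹) • N ^ 0) := h0.symm
    _ ≤ ∑' n : ℕ, entryCLM i j (((n.factorial : ℝ)⁻¹) • N ^ n) := by
        refine Summable.le_tsum hsum' 0 fun n _ => ?_
        show (0:ℝ) ≤ ((n.factorial : ℝ)⁻¹) • (N ^ n) i j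
        have := hpow n i j
        positivity


lemma exp_entry_lower (Q : Matrix (Fin m) (Fin m) ℝ) (c : ℝ)
    (hB : ∀ i j, 0 ≤ (Q + c • (1 : Matrix (Fin m) (Fin m) ℝ)) i j)
    (t : ℝ) (ht : 0 ≤ t) (i j : Fin m) :
    Real.exp (-(t * c)) * (1 : Matrix (Fin m) (Fin m) ℝ) i j
      ≤ NormedSpace.exp (t • Q) i j := by
  letI : SeminormedRing (Matrix (Fin m) (Fin m) ℝ) := Matrix.linftyOpSemiNormedRing
  letI : NormedRing (Matrix (Fin m) (Fin m) ℝ) := Matrix.linftyOpNormedRing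
  letI : NormedAlgebra ℝ (Matrix (Fin m) (Fin m) ℝ) := Matrix.linftyOpNormedAlgebra
  set B := Q + c • (1 : Matrix (Fin m) (Fin m) ℝ) with hBdef
  have hsplit : t • Q = (-(t * c)) • (1 : Matrix (Fin m) (Fin m) ℝ) + t • B := by
    rw [hBdef]; rw [smul_add, smul_smul]; module
  have hcomm : Commute ((-(t * c)) • (1 : Matrix (Fin m) (Fin m) ℝ)) (t • B) :=
    (Commute.one_left (t • B)).smul_left _
  have hexp1 : NormedSpace.exp ((-(t * c)) • (1 : Matrix (Fin m) (Fin m) ℝ))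
      = Real.exp (-(t * c)) • (1 : Matrix (Fin m) (Fin m) ℝ) := by
    have h1 : (-(t * c)) • (1 : Matrix (Fin m) (Fin m) ℝ)
        = algebraMap ℝ (Matrix (Fin m) (Fin m) ℝ) (-(t * c)) :=
      (Algebra.algebraMap_eq_smul_one _).symm
    rw [h1, Real.exp_eq_exp_ℝ, ← Algebra.algebraMap_eq_smul_one]
    exact (algebraMap_exp_comm _).symm
  have hfact : NormedSpace.exp (t • Q)
      = Real.exp (-(t * c)) • NormedSpace.exp (t • B) := by
    rw [hsplit, Matrix.exp_add_of_commute _ _ hcomm, hexp1, smul_mul_assoc, one_mul]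
  rw [hfact]
  have htB : ∀ a b, 0 ≤ (t • B) a b := fun a b => by
    have := hB a b; rw [hBdef] at this ⊢
    exact smul_nonneg ht this
  have := exp_entry_nonneg (t • B) htB i j
  have hle : (1 : Matrix (Fin m) (Fin m) ℝ) i j ≤ NormedSpace.exp (t • B) i j := this
  have : (Real.exp (-(t * c)) • NormedSpace.exp (t • B)) i j
      = Real.exp (-(t * c)) * NormedSpace.exp (t • B) i j := rfl
  rw [this]
  exact mul_le_mul_of_nonneg_left hle (Real.exp_pos _).le


/-- The normalized posterior flow `x(t) = (π ·ᵥ exp(t·Q)) / s(t)`, `Q = G − diag(ᾱ)`,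
has strictly positive normalizer and satisfies the inter-event filtering ODE
`x_i' = Σ_j x_j G_{ji} − x_i ᾱ(i) + x_i Σ_j x_j ᾱ(j)` for `t ≥ 0`. -/
theorem posterior_flow_ode (m : ℕ) (hm : 1 ≤ m)
    (G : Matrix (Fin m) (Fin m) ℝ) (hGoff : ∀ i j, i ≠ j → 0 ≤ G i j)
    (hGrow : ∀ i, (∑ j, G i j) = 0)
    (α : Fin m → ℝ) (hα : ∀ i, 0 ≤ α i)
    (π : Fin m → ℝ) (hπ : ∀ i, 0 ≤ π i) (hπsum : (∑ i, π i) = 1) :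
    let Q := G - Matrix.diagonal α
    let y : ℝ → Fin m → ℝ := fun t => π ᵥ* NormedSpace.exp (t • Q)
    let s : ℝ → ℝ := fun t => ∑ i, y t i
    let x : ℝ → Fin m → ℝ := fun t i => y t i / s t
    ∀ t : ℝ, 0 ≤ t → 0 < s t ∧
      ∀ i, HasDerivAt (fun τ => x τ i)
        ((∑ j, x t j * G j i) - x t i * α i + x t i * (∑ j, x t j * α j)) t := by
  intro Q y s x t ht
  letI : SeminormedRing (Matrix (Fin m) (Fin m) ℝ) := Matrix.linftyOpSemiNormedRing
  letI : NormedRing (Matrix (Fin m) (Fin m) ℝ) := Matrix.linftyOpNormedRing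
  letI : NormedAlgebra ℝ (Matrix (Fin m) (Fin m) ℝ) := Matrix.linftyOpNormedAlgebra
  have hQdef : Q = G - Matrix.diagonal α := rfl
  have hy_def : ∀ u k, y u k = ∑ j, π j * NormedSpace.exp (u • Q) j k := fun u k => rfl
  -- diagonal entries of G are ≤ 0
  have hGdiag : ∀ i, G i i ≤ 0 := by
    intro i
    have h : G i i = -∑ j ∈ Finset.univ.erase i, G i j := by
      have := hGrow i
      rw [← Finset.add_sum_erase _ _ (Finset.mem_univ i)] at this
      linarith
    rw [h, neg_nonpos]
    exact Finset.sum_nonneg fun j hj => hGoff i j (Finset.ne_of_mem_erase hj).symm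
  set c : ℝ := ∑ i, (α i - G i i) with hc
  have hcle : ∀ i, α i - G i i ≤ c :=
    fun i => Finset.single_le_sum (f := fun j => α j - G j j)
      (fun j _ => sub_nonneg.2 (le_trans (hGdiag j) (hα j))) (Finset.mem_univ i)
  have hB : ∀ i j, 0 ≤ (Q + c • (1 : Matrix (Fin m) (Fin m) ℝ)) i j := by
    intro i j
    by_cases hij : i = j
    · subst hij
      simp only [Matrix.add_apply, hQdef, Matrix.sub_apply, Matrix.diagonal_apply_eq,
        Matrix.smul_apply, Matrix.one_apply_eq, smul_eq_mul, mul_one]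
      have := hcle i; linarith
    · simp only [Matrix.add_apply, hQdef, Matrix.sub_apply, Matrix.diagonal_apply_ne _ hij,
        Matrix.smul_apply, Matrix.one_apply_ne hij, smul_eq_mul, mul_zero, sub_zero, add_zero]
      exact hGoff i j hij
  -- positivity of s
  have hentrylb : ∀ i j, Real.exp (-(t * c)) * (1 : Matrix (Fin m) (Fin m) ℝ) i j
      ≤ NormedSpace.exp (t • Q) i j := exp_entry_lower Q c hB t ht
  have hslb : Real.exp (-(t * c)) ≤ s t := by
    have : s t = ∑ j, π j * ∑ i, NormedSpace.exp (t • Q) j i := by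
      show (∑ i, y t i) = _
      simp only [hy_def]
      rw [Finset.sum_comm]
      simp [Finset.mul_sum]
    rw [this]
    calc Real.exp (-(t * c)) = ∑ j, π j * Real.exp (-(t * c)) := by
          rw [← Finset.sum_mul, hπsum, one_mul]
      _ ≤ ∑ j, π j * ∑ i, NormedSpace.exp (t • Q) j i := by
          refine Finset.sum_le_sum fun j _ => mul_le_mul_of_nonneg_left ?_ (hπ j)
          calc Real.exp (-(t * c))
              = ∑ i, Real.exp (-(t * c)) * (1 : Matrix (Fin m) (Fin m) ℝ) j i := by
                rw [← Finset.mul_sum]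
                simp [Matrix.one_apply]
            _ ≤ ∑ i, NormedSpace.exp (t • Q) j i :=
                Finset.sum_le_sum fun i _ => hentrylb j i
  have hs : 0 < s t := lt_of_lt_of_le (Real.exp_pos _) hslb
  refine ⟨hs, fun i => ?_⟩
  -- derivatives
  have hexp : HasDerivAt (fun u : ℝ => NormedSpace.exp (u • Q))
      (NormedSpace.exp (t • Q) * Q) t := hasDerivAt_exp_smul_const Q t
  have hentryD : ∀ a b : Fin m, HasDerivAt (fun τ => NormedSpace.exp (τ • Q) a b)
      ((NormedSpace.exp (t • Q) * Q) a b) t := fun a b =>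
    (entryCLM a b).hasFDerivAt.comp_hasDerivAt t hexp
  have hyd : ∀ k, HasDerivAt (fun τ => y τ k) (∑ j, y t j * Q j k) t := by
    intro k
    have h1 : HasDerivAt (fun τ => ∑ j, π j * NormedSpace.exp (τ • Q) j k)
        (∑ j, π j * (NormedSpace.exp (t • Q) * Q) j k) t :=
      HasDerivAt.fun_sum fun j _ => (hentryD j k).const_mul (π j)
    have h2 : (∑ j, π j * (NormedSpace.exp (t • Q) * Q) j k) = ∑ j, y t j * Q j k := by
      simp only [Matrix.mul_apply, Finset.mul_sum]
      rw [Finset.sum_comm]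
      congr 1
      ext j
      rw [hy_def, Finset.sum_mul]
      congr 1; ext l; ring
    rw [← h2]
    exact h1.congr_deriv rfl |>.congr_of_eventuallyEq (by filter_upwards with τ; rw [hy_def])
  have hsd : HasDerivAt s (-(∑ j, y t j * α j)) t := by
    have h1 : HasDerivAt (fun τ => ∑ k, y τ k) (∑ k, ∑ j, y t j * Q j k) t :=
      HasDerivAt.fun_sum fun k _ => hyd k
    have h2 : (∑ k, ∑ j, y t j * Q j k) = -(∑ j, y t j * α j) := by
      rw [Finset.sum_comm]
      rw [← Finset.sum_neg_distrib]
      congr 1; ext j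
      rw [← Finset.mul_sum]
      have : (∑ k, Q j k) = -(α j) := by
        simp only [hQdef, Matrix.sub_apply, Finset.sum_sub_distrib, hGrow j]
        simp [Matrix.diagonal_apply, Finset.sum_ite_eq]
      rw [this]; ring
    rw [← h2]; exact h1
  have hxd := (hyd i).div hsd (ne_of_gt hs)
  have hval : ((∑ j, y t j * Q j i) * s t - y t i * -(∑ j, y t j * α j)) / s t ^ 2
      = (∑ j, x t j * G j i) - x t i * α i + x t i * (∑ j, x t j * α j) := by
    have hQsum : (∑ j, y t j * Q j i) = (∑ j, y t j * G j i) - y t i * α i := by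
      simp only [hQdef, Matrix.sub_apply, mul_sub, Finset.sum_sub_distrib]
      congr 1
      simp [Matrix.diagonal_apply, Finset.sum_ite_eq, mul_comm]
    have hxv : ∀ j, x t j = y t j / s t := fun j => rfl
    rw [hQsum]
    simp only [hxv]
    simp only [div_mul_eq_mul_div, ← Finset.sum_div]
    field_simp
    ring
  rw [← hval]
  exact hxd
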